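/- Let (𝒟,K) and (𝒞,J) be small sites and p : 𝒟 ⥤ 𝒞 a comorphism of sites which is moreover continuous, so that the restriction functor ρ_p : Sheaf J ⥤ Sheaf K, F ↦ F ∘ p.op, is defined; let L : Sheaf K ⥤ Sheaf J be a left adjoint of ρ_p. Then a morphism f : d' ⟶ d of 𝒟 is K-locally cartesian if and only if l_K(f) : l_K(d') ⟶ l_K(d) is cartesian for L. -/

import Mathlib

open CategoryTheory Limits

universe u

/-- A morphism `f : d' ⟶ d` is cartesian for a functor `p : 𝒟 ⥤ 𝒞`. -/
def IsCartesianFor {D : Type*} [Category D] {C : Type*} [Category C] (p : D ⥤ C)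
    {d' d : D} (f : d' ⟶ d) : Prop :=
  ∀ {d'' : D} (g : d'' ⟶ d) (h : p.obj d'' ⟶ p.obj d'),
    h ≫ p.map f = p.map g → ∃! h' : d'' ⟶ d', p.map h' = h ∧ h' ≫ f = g

/-- A morphism `f : d' ⟶ d` is `K`-locally cartesian for `p : 𝒟 ⥤ 𝒞`. -/
def LocallyCartesian {D : Type*} [Category D] {C : Type*} [Category C]
    (K : GrothendieckTopology D) (p : D ⥤ C) {d' d : D} (f : d' ⟶ d) : Prop :=
  (∀ (d'' : D) (g : d'' ⟶ d) (h : p.obj d'' ⟶ p.obj d'),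
      h ≫ p.map f = p.map g →
      ∃ S : Sieve d'', S ∈ K d'' ∧
        ∀ {e : D} (v : e ⟶ d''), S.arrows v →
          ∃ hv : e ⟶ d', p.map v ≫ h = p.map hv ∧ hv ≫ f = v ≫ g) ∧
  (∀ (d'' : D) (h h' : d'' ⟶ d'), h ≫ f = h' ≫ f → p.map h = p.map h' →
      ∃ S : Sieve d'', S ∈ K d'' ∧ ∀ {e : D} (v : e ⟶ d''), S.arrows v → v ≫ h = v ≫ h')

/-- A functor `p : (𝒟, K) ⥤ (𝒞, J)` is a comorphism of sites. -/
def IsComorphismOfSites {D : Type*} [Category D] {C : Type*} [Category C] (p : D ⥤ C)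
    (K : GrothendieckTopology D) (J : GrothendieckTopology C) : Prop :=
  ∀ (d : D) (S : Sieve (p.obj d)), S ∈ J (p.obj d) → S.functorPullback p ∈ K d

variable {D C : Type u} [SmallCategory D] [SmallCategory C]

/-- `l_J : 𝒞 ⥤ Sheaf J`, the Yoneda embedding followed by sheafification. -/
noncomputable def lSh (J : GrothendieckTopology C) : C ⥤ Sheaf J (Type u) :=
  yoneda ⋙ presheafToSheaf J (Type u)

/-- The restriction functor `ρ_p : Sheaf J ⥤ Sheaf K`, `F ↦ F ∘ p.op`, defined when `p` is
continuous. -/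
def restrictSheaf (p : D ⥤ C) (K : GrothendieckTopology D) (J : GrothendieckTopology C)
    (hcont : ∀ F : Sheaf J (Type u), Presheaf.IsSheaf K (p.op ⋙ F.val)) :
    Sheaf J (Type u) ⥤ Sheaf K (Type u) where
  obj F := ⟨p.op ⋙ F.val, hcont F⟩
  map φ := ⟨Functor.whiskerLeft p.op φ.hom⟩
  map_id := by intros; apply Sheaf.hom_ext; rfl
  map_comp := by intros; apply Sheaf.hom_ext; rfl

/-!
The comparison `θ_c : l_K c ⟶ ρ_p (l_J (p c))` classifying the section `𝟙 (p c)` has as adjoint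
transpose a map `L (l_K c) ⟶ l_J (p c)`, which is an isomorphism because both sides corepresent
`F ↦ F (p c)`. Transporting along the adjunction, `l_K f` is cartesian for `L` exactly when the
naturality square of `θ` at `f` is a pullback of sheaves, i.e. a pullback of sets at each object.
Every section of `l_K c` is locally of the form `l_K v`, and two such sections agree iff the
morphisms agree on a cover, so the sectionwise pullback condition unwinds to the two clauses of
`K`-local cartesianness; covers of `p e` are turned into covers of `e` by the comorphism property.
-/

open Opposite

section Site

variable {E : Type u} [SmallCategory E] (T : GrothendieckTopology E)

lemma exists_covering_of_local {e : E} {S : Sieve e} (hS : S ∈ T e)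
    (P : ∀ ⦃e' : E⦄, (e' ⟶ e) → Prop)
    (h : ∀ ⦃e' : E⦄ (v : e' ⟶ e), S.arrows v →
      ∃ R ∈ T e', ∀ ⦃e₀ : E⦄ (z : e₀ ⟶ e'), R.arrows z → P (z ≫ v)) :
    ∃ W ∈ T e, ∀ ⦃e' : E⦄ (w : e' ⟶ e), W.arrows w → P w := by
  choose R hR hRP using h
  refine ⟨Sieve.bind S.arrows fun _ _ hv => R _ hv, T.bind_covering hS hR, ?_⟩
  rintro e' w ⟨_, z, v, hv, hz, rfl⟩
  exact hRP _ hv _ hz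

lemma Sheaf.eq_of_locally_eq (F : Sheaf T (Type u)) {e : E} {s t : F.obj.obj (op e)}
    {S : Sieve e} (hS : S ∈ T e)
    (h : ∀ ⦃e' : E⦄ (w : e' ⟶ e), S.arrows w → F.obj.map w.op s = F.obj.map w.op t) : s = t :=
  (((isSheaf_iff_isSheaf_of_type T F.obj).1 F.property).isSeparated S hS).ext fun _ w hw => h w hw

lemma Sheaf.exists_of_locally {F G H : Sheaf T (Type u)} (φ : F ⟶ G) (ψ : F ⟶ H)
    (hinj : ∀ ⦃e : E⦄ (x y : F.obj.obj (op e)),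
      φ.hom.app _ x = φ.hom.app _ y → ψ.hom.app _ x = ψ.hom.app _ y → x = y)
    {e : E} (b : G.obj.obj (op e)) (a : H.obj.obj (op e)) {W : Sieve e} (hW : W ∈ T e)
    (hloc : ∀ ⦃e' : E⦄ (w : e' ⟶ e), W.arrows w →
      ∃ x, φ.hom.app _ x = G.obj.map w.op b ∧ ψ.hom.app _ x = H.obj.map w.op a) :
    ∃ x, φ.hom.app _ x = b ∧ ψ.hom.app _ x = a := by
  choose x hxb hxa using hloc
  have hsheaf := (isSheaf_iff_isSheaf_of_type T F.obj).1 F.property W hW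
  have hcompat : Presieve.FamilyOfElements.Compatible (P := F.obj) fun _ w hw => x w hw := by
    intro _ _ _ g₁ g₂ f₁ f₂ h₁ h₂ hcomm
    apply hinj
    · simp only [NatTrans.naturality_apply, hxb, ← Functor.map_comp_apply, ← op_comp, hcomm]
    · simp only [NatTrans.naturality_apply, hxa, ← Functor.map_comp_apply, ← op_comp, hcomm]
  refine ⟨hsheaf.amalgamate _ hcompat, Sheaf.eq_of_locally_eq T G hW fun _ w hw => ?_,
    Sheaf.eq_of_locally_eq T H hW fun _ w hw => ?_⟩
  · rw [← NatTrans.naturality_apply, hsheaf.valid_glue hcompat w hw, hxb]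
  · rw [← NatTrans.naturality_apply, hsheaf.valid_glue hcompat w hw, hxa]

noncomputable def lShSection (c : E) {e : E} (v : e ⟶ c) : ((lSh T).obj c).obj.obj (op e) :=
  (toSheafify T (yoneda.obj c)).app (op e) v

lemma lShSection_restrict (c : E) {e e' : E} (w : e' ⟶ e) (v : e ⟶ c) :
    ((lSh T).obj c).obj.map w.op (lShSection T c v) = lShSection T c (w ≫ v) :=
  (NatTrans.naturality_apply (toSheafify T (yoneda.obj c)) w.op v).symm

lemma lShSection_map {c c' : E} (m : c ⟶ c') {e : E} (v : e ⟶ c) :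
    ((lSh T).map m).hom.app (op e) (lShSection T c v) = lShSection T c' (v ≫ m) :=
  (types_congr_hom (NatTrans.congr_app (toSheafify_naturality T (yoneda.map m)) (op e)) v).symm

lemma exists_covering_restrict_eq_lShSection (c : E) {e : E}
    (s : ((lSh T).obj c).obj.obj (op e)) :
    ∃ S ∈ T e, ∀ ⦃e' : E⦄ (v : e' ⟶ e), S.arrows v →
      ∃ g : e' ⟶ c, ((lSh T).obj c).obj.map v.op s = lShSection T c g :=
  ⟨_, Presheaf.imageSieve_mem T (toSheafify T (yoneda.obj c)) s,
    fun _ _ ⟨g, hg⟩ => ⟨g, hg.symm⟩⟩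

lemma exists_covering_comp_eq_of_lShSection_eq (c : E) {e : E} {g₁ g₂ : e ⟶ c}
    (h : lShSection T c g₁ = lShSection T c g₂) :
    ∃ S ∈ T e, ∀ ⦃e' : E⦄ (v : e' ⟶ e), S.arrows v → v ≫ g₁ = v ≫ g₂ :=
  ⟨Presheaf.equalizerSieve (F := yoneda.obj c) g₁ g₂,
    Presheaf.equalizerSieve_mem T (toSheafify T (yoneda.obj c)) g₁ g₂ h, fun _ _ hv => hv⟩

noncomputable def lShHomEquiv (c : E) (F : Sheaf T (Type u)) :
    ((lSh T).obj c ⟶ F) ≃ F.obj.obj (op c) :=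
  ((sheafificationAdjunction T (Type u)).homEquiv _ _).trans yonedaEquiv

lemma lShHomEquiv_apply (c : E) {F : Sheaf T (Type u)} (m : (lSh T).obj c ⟶ F) :
    lShHomEquiv T c F m = m.hom.app (op c) (lShSection T c (𝟙 c)) :=
  rfl

end Site

lemma isPullback_iff_existsUnique {𝒳 : Type*} [Category 𝒳] {P X Y Z : 𝒳} {fst : P ⟶ X}
    {snd : P ⟶ Y} {f : X ⟶ Z} {g : Y ⟶ Z} (w : fst ≫ f = snd ≫ g) :
    IsPullback fst snd f g ↔ ∀ ⦃W : 𝒳⦄ (h : W ⟶ X) (k : W ⟶ Y), h ≫ f = k ≫ g →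
      ∃! l : W ⟶ P, l ≫ fst = h ∧ l ≫ snd = k := by
  refine ⟨fun hP W h k hw => ⟨hP.lift h k hw, ⟨hP.lift_fst h k hw, hP.lift_snd h k hw⟩,
    fun l ⟨hl₁, hl₂⟩ => hP.hom_ext (by simp [hl₁]) (by simp [hl₂])⟩, fun H => ?_⟩
  choose l hl huniq using H
  exact .of_isLimit' ⟨w⟩ (PullbackCone.IsLimit.mk w (fun s => l s.fst s.snd s.condition)
    (fun s => (hl _ _ _).1) (fun s => (hl _ _ _).2) fun s m h₁ h₂ => huniq _ _ _ m ⟨h₁, h₂⟩)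

lemma isCartesianFor_iff_isPullback {𝒳 𝒴 : Type*} [Category 𝒳] [Category 𝒴] {L : 𝒳 ⥤ 𝒴}
    {R : 𝒴 ⥤ 𝒳} (adj : L ⊣ R) {A' A : 𝒳} {B' B : 𝒴} (f : A' ⟶ A) (φ : B' ⟶ B)
    (ε' : L.obj A' ⟶ B') (ε : L.obj A ⟶ B) [IsIso ε'] [Mono ε]
    (w : L.map f ≫ ε = ε' ≫ φ) :
    IsCartesianFor L f ↔ IsPullback (adj.homEquiv _ _ ε') f (R.map φ) (adj.homEquiv _ _ ε) := by
  have w' : adj.homEquiv _ _ ε' ≫ R.map φ = f ≫ adj.homEquiv _ _ ε := by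
    rw [← adj.homEquiv_naturality_right, ← adj.homEquiv_naturality_left, w]
  rw [isPullback_iff_existsUnique w']
  let e : ∀ W : 𝒳, (L.obj W ⟶ L.obj A') ≃ (W ⟶ R.obj B') := fun W =>
    ((Iso.refl _).homCongr (asIso ε')).trans (adj.homEquiv _ _)
  have e_apply : ∀ {W : 𝒳} (h : L.obj W ⟶ L.obj A'), e W h = adj.homEquiv _ _ (h ≫ ε') := by
    intro W h; simp [e]
  have map_eq_iff : ∀ {W : 𝒳} (l : W ⟶ A') (h : L.obj W ⟶ L.obj A'),
      L.map l = h ↔ l ≫ adj.homEquiv _ _ ε' = e W h := by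
    intro W l h
    rw [← (e W).injective.eq_iff, e_apply, e_apply, adj.homEquiv_naturality_left]
  have compat_iff : ∀ {W : 𝒳} (g : W ⟶ A) (h : L.obj W ⟶ L.obj A'),
      h ≫ L.map f = L.map g ↔ e W h ≫ R.map φ = g ≫ adj.homEquiv _ _ ε := by
    intro W g h
    rw [e_apply, ← adj.homEquiv_naturality_right, ← adj.homEquiv_naturality_left,
      (adj.homEquiv _ _).injective.eq_iff, Category.assoc, ← w, ← Category.assoc,
      cancel_mono]
  constructor
  · intro hcart W k g hkg
    obtain ⟨h, rfl⟩ := (e W).surjective k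
    simpa only [map_eq_iff] using hcart g h ((compat_iff g h).2 hkg)
  · intro hpb W g h hhg
    simpa only [map_eq_iff] using hpb (e W h) g ((compat_iff g h).1 hhg)

lemma Sheaf.isPullback_iff_isPullback_app {E : Type u} [SmallCategory E]
    {T : GrothendieckTopology E} {F₁ F₂ F₃ F₄ : Sheaf T (Type u)} {f₁ : F₁ ⟶ F₂}
    {f₂ : F₁ ⟶ F₃} {f₃ : F₂ ⟶ F₄} {f₄ : F₃ ⟶ F₄} :
    IsPullback f₁ f₂ f₃ f₄ ↔ ∀ e : Eᵒᵖ,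
      IsPullback (f₁.hom.app e) (f₂.hom.app e) (f₃.hom.app e) (f₄.hom.app e) := by
  rw [← IsPullback.iff_app]
  exact ⟨fun h => h.map (sheafToPresheaf T _),
    fun h => h.of_map (sheafToPresheaf T _) (Sheaf.hom_ext h.w)⟩

section Comparison

variable (p : D ⥤ C) (K : GrothendieckTopology D) (J : GrothendieckTopology C)
  (hcont : ∀ F : Sheaf J (Type u), Presheaf.IsSheaf K (p.op ⋙ F.obj))

noncomputable def lShToRestrict (c : D) :
    (lSh K).obj c ⟶ (restrictSheaf p K J hcont).obj ((lSh J).obj (p.obj c)) :=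
  (lShHomEquiv K c _).symm (lShSection J (p.obj c) (𝟙 (p.obj c)))

lemma lShToRestrict_app_lShSection (c : D) {e : D} (v : e ⟶ c) :
    (lShToRestrict p K J hcont c).hom.app (op e) (lShSection K c v)
      = lShSection J (p.obj c) (p.map v) := by
  have h : (lShToRestrict p K J hcont c).hom.app (op c) (lShSection K c (𝟙 c))
      = lShSection J (p.obj c) (𝟙 (p.obj c)) :=
    (lShHomEquiv_apply K c _).symm.trans (Equiv.apply_symm_apply _ _)
  rw [← Category.comp_id v, ← lShSection_restrict, NatTrans.naturality_apply, h]
  exact (lShSection_restrict J _ _ _).trans (by rw [Category.comp_id, Category.comp_id]; rfl)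

lemma lShHomEquiv_lShToRestrict_comp (c : D) {F : Sheaf J (Type u)}
    (u : (lSh J).obj (p.obj c) ⟶ F) :
    lShHomEquiv K c _ (lShToRestrict p K J hcont c ≫ (restrictSheaf p K J hcont).map u)
      = lShHomEquiv J (p.obj c) F u := by
  rw [lShHomEquiv_apply, lShHomEquiv_apply]
  exact congrArg (u.hom.app _) ((lShToRestrict_app_lShSection p K J hcont c _).trans
    (by rw [p.map_id]))

lemma lShToRestrict_naturality {c c' : D} (m : c ⟶ c') :
    (lSh K).map m ≫ lShToRestrict p K J hcont c'
      = lShToRestrict p K J hcont c ≫ (restrictSheaf p K J hcont).map ((lSh J).map (p.map m)) := by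
  apply (lShHomEquiv K c _).injective
  rw [lShHomEquiv_lShToRestrict_comp, lShHomEquiv_apply, lShHomEquiv_apply]
  change (lShToRestrict p K J hcont c').hom.app (op c)
    (((lSh K).map m).hom.app (op c) (lShSection K c (𝟙 c))) = _
  rw [lShSection_map, lShSection_map, lShToRestrict_app_lShSection, Category.id_comp,
    Category.id_comp]

end Comparison

namespace LocallyCartesian

variable {p : D ⥤ C} {K : GrothendieckTopology D} {J : GrothendieckTopology C}
  {d' d : D} {f : d' ⟶ d}

lemma lShSection_eq (hLC : LocallyCartesian K p f) (hp : IsComorphismOfSites p K J) {e : D}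
    {a b : e ⟶ d'}
    (h₁ : lShSection J _ (p.map a) = lShSection J _ (p.map b))
    (h₂ : lShSection K d (a ≫ f) = lShSection K d (b ≫ f)) :
    lShSection K d' a = lShSection K d' b := by
  obtain ⟨R₁, hR₁, hR₁eq⟩ := exists_covering_comp_eq_of_lShSection_eq J _ h₁
  obtain ⟨R₂, hR₂, hR₂eq⟩ := exists_covering_comp_eq_of_lShSection_eq K _ h₂
  obtain ⟨W, hW, hWeq⟩ := exists_covering_of_local K
    (K.intersection_covering (hp _ _ hR₁) hR₂) (fun _ w => w ≫ a = w ≫ b) fun _ z hz => by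
      obtain ⟨S, hS, hSeq⟩ := hLC.2 _ (z ≫ a) (z ≫ b)
        (by simpa using hR₂eq z hz.2) (by simpa using hR₁eq (p.map z) hz.1)
      exact ⟨S, hS, fun _ v hv => by simpa using hSeq v hv⟩
  refine Sheaf.eq_of_locally_eq K _ hW fun _ w hw => ?_
  rw [lShSection_restrict, lShSection_restrict, hWeq w hw]

lemma exists_covering_lift (hLC : LocallyCartesian K p f) (hp : IsComorphismOfSites p K J)
    {e : D} (g : e ⟶ d) (m : p.obj e ⟶ p.obj d')
    (h : lShSection J _ (m ≫ p.map f) = lShSection J _ (p.map g)) :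
    ∃ W ∈ K e, ∀ ⦃e' : D⦄ (w : e' ⟶ e), W.arrows w →
      ∃ c : e' ⟶ d', p.map w ≫ m = p.map c ∧ c ≫ f = w ≫ g := by
  obtain ⟨R, hR, hReq⟩ := exists_covering_comp_eq_of_lShSection_eq J _ h
  refine exists_covering_of_local K (hp _ _ hR) _ fun e' z hz => ?_
  obtain ⟨S, hS, hSlift⟩ := hLC.1 e' (z ≫ g) (p.map z ≫ m) (by simpa using hReq (p.map z) hz)
  refine ⟨S, hS, fun _ v hv => ?_⟩
  obtain ⟨c, hc₁, hc₂⟩ := hSlift v hv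
  exact ⟨c, by simpa using hc₁, by simpa using hc₂⟩

variable (hcont : ∀ F : Sheaf J (Type u), Presheaf.IsSheaf K (p.op ⋙ F.obj))

lemma eq_of_app_eq (hLC : LocallyCartesian K p f) (hp : IsComorphismOfSites p K J) {e : D}
    {s t : ((lSh K).obj d').obj.obj (op e)}
    (h₁ : (lShToRestrict p K J hcont d').hom.app (op e) s
      = (lShToRestrict p K J hcont d').hom.app (op e) t)
    (h₂ : ((lSh K).map f).hom.app (op e) s = ((lSh K).map f).hom.app (op e) t) : s = t := by
  obtain ⟨Ss, hSs, hs⟩ := exists_covering_restrict_eq_lShSection K d' s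
  obtain ⟨St, hSt, ht⟩ := exists_covering_restrict_eq_lShSection K d' t
  refine Sheaf.eq_of_locally_eq K _ (K.intersection_covering hSs hSt) fun e' v hv => ?_
  obtain ⟨a, ha⟩ := hs v hv.1
  obtain ⟨b, hb⟩ := ht v hv.2
  rw [ha, hb]
  refine hLC.lShSection_eq hp ?_ ?_
  · rw [← lShToRestrict_app_lShSection p K J hcont, ← lShToRestrict_app_lShSection p K J hcont,
      ← ha, ← hb, NatTrans.naturality_apply, NatTrans.naturality_apply, h₁]
  · rw [← lShSection_map, ← lShSection_map, ← ha, ← hb, NatTrans.naturality_apply,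
      NatTrans.naturality_apply, h₂]

lemma exists_app_eq (hLC : LocallyCartesian K p f) (hp : IsComorphismOfSites p K J) {e : D}
    (b : ((lSh J).obj (p.obj d')).obj.obj (op (p.obj e))) (a : ((lSh K).obj d).obj.obj (op e))
    (h : ((lSh J).map (p.map f)).hom.app _ b = (lShToRestrict p K J hcont d).hom.app (op e) a) :
    ∃ s, (lShToRestrict p K J hcont d').hom.app (op e) s = b
      ∧ ((lSh K).map f).hom.app (op e) s = a := by
  obtain ⟨Sa, hSa, ha⟩ := exists_covering_restrict_eq_lShSection K d a
  obtain ⟨Sb, hSb, hb⟩ := exists_covering_restrict_eq_lShSection J (p.obj d') b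
  obtain ⟨W, hW, hWlift⟩ := exists_covering_of_local K (K.intersection_covering hSa (hp _ _ hSb))
    (fun _ w => ∃ c : _ ⟶ d',
      lShSection J _ (p.map c) = ((lSh J).obj (p.obj d')).obj.map (p.map w).op b
        ∧ lShSection K d (c ≫ f) = ((lSh K).obj d).obj.map w.op a) fun _ v hv => by
      obtain ⟨g, hg⟩ := ha v hv.1
      obtain ⟨m, hm⟩ := hb (p.map v) hv.2
      obtain ⟨R, hR, hRlift⟩ := hLC.exists_covering_lift hp g m (by
        rw [← lShSection_map, ← hm, NatTrans.naturality_apply, h,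
          ← lShToRestrict_app_lShSection p K J hcont, ← hg, NatTrans.naturality_apply]
        rfl)
      refine ⟨R, hR, fun _ z hz => ?_⟩
      obtain ⟨c, hc₁, hc₂⟩ := hRlift z hz
      refine ⟨c, ?_, ?_⟩
      · rw [← hc₁, ← lShSection_restrict, ← hm, p.map_comp, op_comp, Functor.map_comp_apply]
      · rw [hc₂, ← lShSection_restrict, ← hg, op_comp, Functor.map_comp_apply]
  refine Sheaf.exists_of_locally K (lShToRestrict p K J hcont d') ((lSh K).map f)
    (fun _ _ _ h₁ h₂ => hLC.eq_of_app_eq hcont hp h₁ h₂) b a hW fun _ w hw => ?_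
  obtain ⟨c, hc₁, hc₂⟩ := hWlift w hw
  exact ⟨lShSection K d' c, (lShToRestrict_app_lShSection p K J hcont d' c).trans hc₁,
    (lShSection_map K f c).trans hc₂⟩

lemma isPullback_app (hLC : LocallyCartesian K p f) (hp : IsComorphismOfSites p K J) (e : Dᵒᵖ) :
    IsPullback ((lShToRestrict p K J hcont d').hom.app e) (((lSh K).map f).hom.app e)
      (((restrictSheaf p K J hcont).map ((lSh J).map (p.map f))).hom.app e)
      ((lShToRestrict p K J hcont d).hom.app e) :=
  (Types.isPullback_iff _ _ _ _).2
    ⟨congrArg (fun φ => φ.hom.app e) (lShToRestrict_naturality p K J hcont f).symm,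
      fun _ _ ⟨h₁, h₂⟩ => hLC.eq_of_app_eq hcont hp h₁ h₂,
      fun b a h => hLC.exists_app_eq hcont hp b a h⟩

end LocallyCartesian

lemma locallyCartesian_of_isPullback_app {p : D ⥤ C} {K : GrothendieckTopology D}
    {J : GrothendieckTopology C} (hp : IsComorphismOfSites p K J)
    (hcont : ∀ F : Sheaf J (Type u), Presheaf.IsSheaf K (p.op ⋙ F.obj)) {d' d : D} {f : d' ⟶ d}
    (H : ∀ e : Dᵒᵖ, IsPullback ((lShToRestrict p K J hcont d').hom.app e)
      (((lSh K).map f).hom.app e)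
      (((restrictSheaf p K J hcont).map ((lSh J).map (p.map f))).hom.app e)
      ((lShToRestrict p K J hcont d).hom.app e)) :
    LocallyCartesian K p f := by
  refine ⟨fun d'' g h hhg => ?_, fun d'' h h' hf hph => ?_⟩
  · obtain ⟨s, hs₁, hs₂⟩ := Types.exists_of_isPullback (H (op d'')) (lShSection J _ h)
      (lShSection K d g) (by
        change ((lSh J).map (p.map f)).hom.app _ (lShSection J _ h) = _
        rw [lShSection_map, lShToRestrict_app_lShSection, hhg])
    obtain ⟨S, hS, hSrepr⟩ := exists_covering_restrict_eq_lShSection K d' s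
    refine exists_covering_of_local K hS _ fun e' v hv => ?_
    obtain ⟨a, ha⟩ := hSrepr v hv
    have h₁ : lShSection J _ (p.map a) = lShSection J _ (p.map v ≫ h) := by
      rw [← lShToRestrict_app_lShSection p K J hcont, ← ha, NatTrans.naturality_apply, hs₁,
        ← lShSection_restrict]
      rfl
    have h₂ : lShSection K d (a ≫ f) = lShSection K d (v ≫ g) := by
      rw [← lShSection_map, ← ha, NatTrans.naturality_apply, hs₂, lShSection_restrict]
    obtain ⟨R₁, hR₁, hR₁eq⟩ := exists_covering_comp_eq_of_lShSection_eq J _ h₁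
    obtain ⟨R₂, hR₂, hR₂eq⟩ := exists_covering_comp_eq_of_lShSection_eq K _ h₂
    exact ⟨_, K.intersection_covering (hp _ _ hR₁) hR₂, fun _ z hz =>
      ⟨z ≫ a, by simpa using (hR₁eq _ hz.1).symm, by simpa using hR₂eq _ hz.2⟩⟩
  · refine exists_covering_comp_eq_of_lShSection_eq K d' (Types.ext_of_isPullback (H (op d''))
      ?_ ?_)
    · rw [lShToRestrict_app_lShSection, lShToRestrict_app_lShSection, hph]
    · rw [lShSection_map, lShSection_map, hf]

section LeftAdjoint

variable {p : D ⥤ C} {K : GrothendieckTopology D} {J : GrothendieckTopology C}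
  {hcont : ∀ F : Sheaf J (Type u), Presheaf.IsSheaf K (p.op ⋙ F.obj)}
  {L : Sheaf K (Type u) ⥤ Sheaf J (Type u)} (adj : L ⊣ restrictSheaf p K J hcont)

noncomputable def lShComparison (c : D) : L.obj ((lSh K).obj c) ⟶ (lSh J).obj (p.obj c) :=
  (adj.homEquiv _ _).symm (lShToRestrict p K J hcont c)

lemma homEquiv_lShComparison (c : D) :
    adj.homEquiv _ _ (lShComparison adj c) = lShToRestrict p K J hcont c :=
  Equiv.apply_symm_apply _ _

instance isIso_lShComparison (c : D) : IsIso (lShComparison adj c) := by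
  refine isIso_of_coyoneda_map_bijective _ fun F =>
    ((adj.homEquiv _ F).bijective.of_comp_iff' _).1 ?_
  convert (lShHomEquiv K c ((restrictSheaf p K J hcont).obj F)).symm.bijective.comp
    (lShHomEquiv J (p.obj c) F).bijective using 1
  funext u
  refine Equiv.eq_symm_apply _ |>.2 ?_
  rw [Function.comp_apply, adj.homEquiv_naturality_right, homEquiv_lShComparison,
    lShHomEquiv_lShToRestrict_comp]

lemma lShComparison_naturality {c c' : D} (m : c ⟶ c') :
    L.map ((lSh K).map m) ≫ lShComparison adj c' = lShComparison adj c ≫ (lSh J).map (p.map m) := by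
  apply (adj.homEquiv _ _).injective
  rw [adj.homEquiv_naturality_left, adj.homEquiv_naturality_right, homEquiv_lShComparison,
    homEquiv_lShComparison, lShToRestrict_naturality]

end LeftAdjoint

/-- For a continuous comorphism of sites `p : (𝒟,K) ⟶ (𝒞,J)` with `L` a left adjoint of the
restriction functor `ρ_p`, a morphism `f` of `𝒟` is `K`-locally cartesian iff `l_K(f)` is
cartesian for `L`. -/
theorem locallyCartesian_iff_cartesian_for_leftAdjoint
    (p : D ⥤ C) (K : GrothendieckTopology D) (J : GrothendieckTopology C)
    (hp : IsComorphismOfSites p K J)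
    (hcont : ∀ F : Sheaf J (Type u), Presheaf.IsSheaf K (p.op ⋙ F.val))
    (L : Sheaf K (Type u) ⥤ Sheaf J (Type u))
    (adj : L ⊣ restrictSheaf p K J hcont)
    {d' d : D} (f : d' ⟶ d) :
    LocallyCartesian K p f ↔ IsCartesianFor L ((lSh K).map f) := by
  rw [isCartesianFor_iff_isPullback adj _ _ _ _ (lShComparison_naturality adj f),
    homEquiv_lShComparison, homEquiv_lShComparison, Sheaf.isPullback_iff_isPullback_app]
  exact ⟨fun hLC => hLC.isPullback_app hcont hp, locallyCartesian_of_isPullback_app hp hcont⟩
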